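/- arXiv:2310.08106 — 6 statements merged into one kernel-verified Lean document; each statement's English description precedes it below -/
import Mathlib

section
/- If the source and target distributions satisfy the label-shift assumption P_t(z|y) = P_p(z|y), and under the pre-training distribution P_p(y|z) ∝ exp(z_y), then for a class-balanced target distribution, P_t(y|z) = softmax(z − π_p)_y, where π_p(y) = log P_p(y). -/
open Finset Real

/-!
Label shift gives `P_t(z, y) = P_t(y) · P_p(z, y) / P_p(y)`, so for a class-balanced target and
fixed `z` the joint `P_t(z, ·)` is proportional to `P_p(z, ·) / P_p(·)`. The softmax hypothesis
makes `P_p(z, ·)` proportional to `exp (z_·)`, so `P_p(z, y) / P_p(y)` is proportional to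
`exp (z_y - log P_p(y))`. Normalising a function is insensitive to a nonzero constant factor,
and normalising `exp (z_y - π_p(y))` is the softmax.
-/

theorem div_sum_eq_div_sum_of_eq_const_mul {ι 𝕜 : Type*} [Fintype ι] [Field 𝕜]
    {f g : ι → 𝕜} {c : 𝕜} (hc : c ≠ 0) (hfg : ∀ i, f i = c * g i) (y : ι) :
    f y / ∑ i, f i = g y / ∑ i, g i := by
  simp_rw [hfg, ← mul_sum, mul_div_mul_left _ _ hc]

theorem exists_div_eq_const_mul_exp_sub_log {ι : Type*} [Fintype ι] {p q v : ι → ℝ}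
    (hp : ∑ i, p i ≠ 0) (hq : ∀ i, 0 < q i)
    (hsoftmax : ∀ i, p i / ∑ j, p j = exp (v i) / ∑ j, exp (v j)) :
    ∃ c ≠ 0, ∀ i, p i / q i = c * exp (v i - log (q i)) := by
  obtain ⟨i₀, -, -⟩ := exists_ne_zero_of_sum_ne_zero hp
  have hexp : ∑ j, exp (v j) ≠ 0 := (sum_pos (fun j _ => exp_pos (v j)) ⟨i₀, mem_univ i₀⟩).ne'
  refine ⟨(∑ j, p j) / ∑ j, exp (v j), div_ne_zero hp hexp, fun i => ?_⟩
  have hpi : p i = (∑ j, p j) * (exp (v i) / ∑ j, exp (v j)) := by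
    rw [← hsoftmax i, mul_div_cancel₀ _ hp]
  rw [hpi, exp_sub, exp_log (hq i)]
  ring

theorem target_posterior_eq_debiased_softmax_general
    {Z : Type*} {K : ℕ}
    (score : Z → Fin K → ℝ)
    (Pp Pt : Z → Fin K → ℝ)
    (PpY PtY : Fin K → ℝ)
    (hPpYpos : ∀ y, 0 < PpY y) (hPtYpos : ∀ y, 0 < PtY y)
    (hPpZpos : ∀ z, 0 < ∑ y, Pp z y)
    -- label shift: P_t(z|y) = P_p(z|y)
    (hshift : ∀ z y, Pt z y / PtY y = Pp z y / PpY y)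
    -- zero-shot posterior: P_p(y|z) = softmax(score z)_y
    (hzs : ∀ z y, Pp z y / (∑ y', Pp z y') =
      Real.exp (score z y) / ∑ i, Real.exp (score z i))
    -- class-balanced target distribution
    (hbal : ∀ y, PtY y = 1 / K) :
    ∀ z y, Pt z y / (∑ y', Pt z y') =
      Real.exp (score z y - Real.log (PpY y)) /
        ∑ i, Real.exp (score z i - Real.log (PpY i)) := by
  intro z y
  obtain ⟨c, hc, hPp⟩ := exists_div_eq_const_mul_exp_sub_log (hPpZpos z).ne' hPpYpos (hzs z)
  have hK : (1 : ℝ) / K ≠ 0 := hbal y ▸ (hPtYpos y).ne'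
  refine div_sum_eq_div_sum_of_eq_const_mul (f := Pt z)
    (g := fun i => exp (score z i - log (PpY i))) (mul_ne_zero hK hc) (fun i => ?_) y
  rw [mul_assoc, ← hPp i, ← hbal i, ← hshift z i, mul_div_cancel₀ _ (hPtYpos i).ne']

/-- Under label shift (`P_t(z|y) = P_p(z|y)`), a softmax zero-shot posterior
under the pre-training distribution (`P_p(y|z) ∝ exp(z_y)`), and a
class-balanced target distribution, the target posterior is
`P_t(y|z) = softmax(z − π_p)_y` with `π_p(y) = log P_p(y)`. -/
theorem target_posterior_eq_debiased_softmax
    {Z : Type*} [Fintype Z] {K : ℕ} (hK : 0 < K)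
    (score : Z → Fin K → ℝ)
    (Pp Pt : Z → Fin K → ℝ)
    (hPp : ∀ z y, 0 ≤ Pp z y) (hPt : ∀ z y, 0 ≤ Pt z y)
    (hPpsum : ∑ z, ∑ y, Pp z y = 1) (hPtsum : ∑ z, ∑ y, Pt z y = 1)
    (PpY PtY : Fin K → ℝ)
    (hPpY : ∀ y, PpY y = ∑ z, Pp z y)
    (hPtY : ∀ y, PtY y = ∑ z, Pt z y)
    (hPpYpos : ∀ y, 0 < PpY y) (hPtYpos : ∀ y, 0 < PtY y)
    (hPpZpos : ∀ z, 0 < ∑ y, Pp z y) (hPtZpos : ∀ z, 0 < ∑ y, Pt z y)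
    -- label shift: P_t(z|y) = P_p(z|y)
    (hshift : ∀ z y, Pt z y / PtY y = Pp z y / PpY y)
    -- zero-shot posterior: P_p(y|z) = softmax(score z)_y
    (hzs : ∀ z y, Pp z y / (∑ y', Pp z y') =
      Real.exp (score z y) / ∑ i, Real.exp (score z i))
    -- class-balanced target distribution
    (hbal : ∀ y, PtY y = 1 / K) :
    ∀ z y, Pt z y / (∑ y', Pt z y') =
      Real.exp (score z y - Real.log (PpY y)) /
        ∑ i, Real.exp (score z i - Real.log (PpY i)) :=
  target_posterior_eq_debiased_softmax_general score Pp Pt PpY PtY hPpYpos hPtYpos hPpZpos hshift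
    hzs hbal
end

section
/- Under label shift with P_t(z|y) = P_p(z|y), P_p(y|z) ∝ exp(z_y), and a class-balanced target distribution, the classifier x ↦ argmax_y (f_zs(x) − π_p)_y is Bayes optimal among all classifiers that are functions of f_zs(x); consequently R_t(f_zs − π_p) ≤ R_t(h ∘ f_zs) for every function h: ℝ^K → ℝ^K. -/
open Finset

/-- Under label shift, a softmax zero-shot posterior under the pre-training
distribution, and a class-balanced target distribution, the classifier
`x ↦ argmax_y (f_zs(x) − π_p)_y` has target 0-1 risk no larger than the
classifier derived from any function `h` of the zero-shot scores:
`R_t(f_zs − π_p) ≤ R_t(h ∘ f_zs)`. -/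
theorem debiased_zeroshot_is_bayes_optimal
    {X : Type*} [Fintype X] {K : ℕ} (hK : 0 < K)
    (fzs : X → Fin K → ℝ)
    (Pp Pt : X → Fin K → ℝ)
    (hPp : ∀ x y, 0 ≤ Pp x y) (hPt : ∀ x y, 0 ≤ Pt x y)
    (hPpsum : ∑ x, ∑ y, Pp x y = 1) (hPtsum : ∑ x, ∑ y, Pt x y = 1)
    (PpY PtY : Fin K → ℝ)
    (hPpY : ∀ y, PpY y = ∑ x, Pp x y)
    (hPtY : ∀ y, PtY y = ∑ x, Pt x y)
    (hPpYpos : ∀ y, 0 < PpY y) (hPtYpos : ∀ y, 0 < PtY y)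
    (hPpXpos : ∀ x, 0 < ∑ y, Pp x y) (hPtXpos : ∀ x, 0 < ∑ y, Pt x y)
    -- label shift: P_t(x|y) = P_p(x|y)
    (hshift : ∀ x y, Pt x y / PtY y = Pp x y / PpY y)
    -- zero-shot posterior: P_p(y|x) = softmax(f_zs(x))_y
    (hzs : ∀ x y, Pp x y / (∑ y', Pp x y') =
      Real.exp (fzs x y) / ∑ i, Real.exp (fzs x i))
    -- class-balanced target distribution
    (hbal : ∀ y, PtY y = 1 / K)
    -- log pre-training prior
    (piP : Fin K → ℝ) (hpiP : ∀ y, piP y = Real.log (PpY y))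
    -- the debiased zero-shot classifier: argmax of f_zs(x) − π_p
    (c : X → Fin K)
    (hc : ∀ x y, fzs x y - piP y ≤ fzs x (c x) - piP (c x))
    -- an arbitrary classifier that is a function of the zero-shot scores
    (h : (Fin K → ℝ) → (Fin K → ℝ))
    (ch : X → Fin K)
    (hch : ∀ x y, h (fzs x) y ≤ h (fzs x) (ch x)) :
    (∑ x, ∑ y ∈ univ.filter (fun y => y ≠ c x), Pt x y) ≤
      ∑ x, ∑ y ∈ univ.filter (fun y => y ≠ ch x), Pt x y := by
  apply Finset.sum_le_sum
  intro x _
  have key : ∀ z : Fin K, Pt x z =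
      (1 / (K : ℝ)) * ((∑ y', Pp x y') / ∑ i, Real.exp (fzs x i)) *
        Real.exp (fzs x z - piP z) := by
    intro z
    have h1 : Pt x z = PtY z * (Pp x z / PpY z) := by
      rw [← hshift x z, mul_comm, div_mul_cancel₀ _ (hPtYpos z).ne']
    have h2 : Pp x z = (∑ y', Pp x y') * (Real.exp (fzs x z) / ∑ i, Real.exp (fzs x i)) := by
      rw [← hzs x z, mul_comm, div_mul_cancel₀ _ (hPpXpos x).ne']
    have h3 : Real.exp (fzs x z - piP z) = Real.exp (fzs x z) / PpY z := by
      rw [hpiP, Real.exp_sub, Real.exp_log (hPpYpos z)]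
    rw [h1, hbal, h2, h3]
    ring
  have hpos : 0 ≤ (1 / (K : ℝ)) * ((∑ y', Pp x y') / ∑ i, Real.exp (fzs x i)) := by
    have h4 : (0:ℝ) < ∑ i, Real.exp (fzs x i) := by
      apply Finset.sum_pos (fun i _ => Real.exp_pos _)
      exact Finset.univ_nonempty_iff.mpr ⟨⟨0, hK⟩⟩
    have h5 := (hPpXpos x).le
    exact mul_nonneg (by positivity) (div_nonneg h5 h4.le)
  have hmain : Pt x (ch x) ≤ Pt x (c x) := by
    rw [key (ch x), key (c x)]
    exact mul_le_mul_of_nonneg_left (Real.exp_le_exp.mpr (hc x (ch x))) hpos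
  rw [Finset.filter_ne', Finset.filter_ne',
    Finset.sum_erase_eq_sub (Finset.mem_univ _), Finset.sum_erase_eq_sub (Finset.mem_univ _)]
  linarith
end

section
/- Assume f_ft(X) and f_zs(X) are conditionally independent given Y, the label-shift conditions P_t(e|y)=P_s(e|y) and P_t(z|y)=P_p(z|y) hold, and the underlying class probabilities satisfy P_s(y|e) ∝ exp(e_y) and P_p(y|z) ∝ exp(z_y). Then P_t(y | f_ft(x), f_zs(x)) = softmax(f_ft(x) + f_zs(x) − π_s − π_p + π_t)_y, where π_s, π_p, π_t are the log class priors of the source, pre-training, and target distributions. -/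
/-!
Conditional independence and the two label-shift assumptions factor the target joint as
`P_t(e, z, y) = P_t(y) · P_s(e | y) · P_p(z | y)`, and Bayes' rule with the softmax posteriors
gives `P_s(e, y) ∝_y exp(e_y)` and `P_p(z, y) ∝_y exp(z_y)`. Hence, for fixed `(e, z)`,
`P_t(e, z, y)` is proportional in `y` to `exp(e_y + z_y − π_s(y) − π_p(y) + π_t(y))`, and
normalising over `y` yields the softmax.
-/

open Finset Real

noncomputable def softmax {ι : Type*} [Fintype ι] (v : ι → ℝ) (i : ι) : ℝ :=
  exp (v i) / ∑ j, exp (v j)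

section Softmax

variable {ι : Type*} [Fintype ι]

theorem softmax_pos (v : ι → ℝ) (i : ι) : 0 < softmax v i :=
  div_pos (exp_pos _) (sum_pos (fun j _ => exp_pos (v j)) ⟨i, mem_univ i⟩)

theorem eq_sum_mul_softmax {p v : ι → ℝ} {i : ι} (h : p i / ∑ j, p j = softmax v i) :
    p i = (∑ j, p j) * softmax v i := by
  have hsum : ∑ j, p j ≠ 0 := by
    intro h0
    rw [h0, div_zero] at h
    exact (softmax_pos v i).ne h
  rw [← h, mul_div_cancel₀ _ hsum]

end Softmax

theorem div_sum_eq_div_sum_of_forall_eq_mul {ι 𝕜 : Type*} [Fintype ι] [Field 𝕜] {f g : ι → 𝕜}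
    (c : 𝕜) (hfg : ∀ i, f i = c * g i) (hf : ∑ i, f i ≠ 0) (i : ι) :
    f i / ∑ j, f j = g i / ∑ j, g j := by
  have hsum : ∑ j, f j = c * ∑ j, g j := by
    rw [mul_sum]
    exact sum_congr rfl fun j _ => hfg j
  have hc : c ≠ 0 := by
    rintro rfl
    exact hf (by rw [hsum, zero_mul])
  rw [hfg i, hsum, mul_div_mul_left _ _ hc]

theorem exp_sub_log_sub_log_add_log {u a b t : ℝ} (ha : 0 < a) (hb : 0 < b) (ht : 0 < t) :
    exp (u - log a - log b + log t) = exp u * t / (a * b) := by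
  rw [exp_add, exp_sub, exp_sub, exp_log ha, exp_log hb, exp_log ht]
  ring

theorem gla_posterior_formula_general
    {E Z : Type*} [Fintype E] [Fintype Z] {K : ℕ}
    (vece : E → Fin K → ℝ) (vecz : Z → Fin K → ℝ)
    (Pt : E → Z → Fin K → ℝ)               -- target joint over (e, z, y)
    (Ps : E → Fin K → ℝ) (Pp : Z → Fin K → ℝ)  -- source and pre-training joints
    (PtY PsY PpY : Fin K → ℝ)
    (hPtYpos : ∀ y, 0 < PtY y) (hPsYpos : ∀ y, 0 < PsY y) (hPpYpos : ∀ y, 0 < PpY y)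
    (hPtEZpos : ∀ e z, 0 < ∑ y, Pt e z y)
    -- conditional independence of e and z given y under P_t:
    -- P_t(e,z|y) = P_t(e|y) · P_t(z|y)
    (hindep : ∀ e z y,
      Pt e z y / PtY y = ((∑ z', Pt e z' y) / PtY y) * ((∑ e', Pt e' z y) / PtY y))
    -- label shift: P_t(e|y) = P_s(e|y) and P_t(z|y) = P_p(z|y)
    (hshiftE : ∀ e y, (∑ z', Pt e z' y) / PtY y = Ps e y / PsY y)
    (hshiftZ : ∀ z y, (∑ e', Pt e' z y) / PtY y = Pp z y / PpY y)
    -- softmax posteriors: P_s(y|e) ∝ exp(e_y) and P_p(y|z) ∝ exp(z_y)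
    (hfts : ∀ e y, Ps e y / (∑ y', Ps e y') =
      Real.exp (vece e y) / ∑ i, Real.exp (vece e i))
    (hzs : ∀ z y, Pp z y / (∑ y', Pp z y') =
      Real.exp (vecz z y) / ∑ i, Real.exp (vecz z i)) :
    ∀ e z y, Pt e z y / (∑ y', Pt e z y') =
      Real.exp (vece e y + vecz z y - Real.log (PsY y) - Real.log (PpY y)
        + Real.log (PtY y)) /
      ∑ i, Real.exp (vece e i + vecz z i - Real.log (PsY i) - Real.log (PpY i)
        + Real.log (PtY i)) := by
  intro e z
  have hjoint : ∀ y, Pt e z y = PtY y * (Ps e y / PsY y) * (Pp z y / PpY y) := fun y => by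
    have h := hindep e z y
    rw [hshiftE, hshiftZ, div_eq_iff (hPtYpos y).ne'] at h
    rw [h]
    ring
  refine div_sum_eq_div_sum_of_forall_eq_mul
    ((∑ y, Ps e y) * (∑ y, Pp z y) / ((∑ i, exp (vece e i)) * ∑ i, exp (vecz z i)))
    (fun y => ?_) (hPtEZpos e z).ne'
  rw [hjoint, eq_sum_mul_softmax (hfts e y), eq_sum_mul_softmax (hzs z y),
    exp_sub_log_sub_log_add_log (hPsYpos y) (hPpYpos y) (hPtYpos y), exp_add, softmax, softmax]
  ring

/-- GLA posterior formula: under conditional independence of the two score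
vectors given the label, label shift (`P_t(e|y)=P_s(e|y)`,
`P_t(z|y)=P_p(z|y)`), and softmax posteriors `P_s(y|e) ∝ exp(e_y)`,
`P_p(y|z) ∝ exp(z_y)`, the target posterior is
`P_t(y|e,z) = softmax(e + z − π_s − π_p + π_t)_y`. -/
theorem gla_posterior_formula
    {E Z : Type*} [Fintype E] [Fintype Z] {K : ℕ} (hK : 0 < K)
    (vece : E → Fin K → ℝ) (vecz : Z → Fin K → ℝ)
    (Pt : E → Z → Fin K → ℝ)               -- target joint over (e, z, y)
    (Ps : E → Fin K → ℝ) (Pp : Z → Fin K → ℝ)  -- source and pre-training joints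
    (hPt : ∀ e z y, 0 ≤ Pt e z y) (hPs : ∀ e y, 0 ≤ Ps e y) (hPp : ∀ z y, 0 ≤ Pp z y)
    (hPtsum : ∑ e, ∑ z, ∑ y, Pt e z y = 1)
    (hPssum : ∑ e, ∑ y, Ps e y = 1) (hPpsum : ∑ z, ∑ y, Pp z y = 1)
    (PtY PsY PpY : Fin K → ℝ)
    (hPtY : ∀ y, PtY y = ∑ e, ∑ z, Pt e z y)
    (hPsY : ∀ y, PsY y = ∑ e, Ps e y)
    (hPpY : ∀ y, PpY y = ∑ z, Pp z y)
    (hPtYpos : ∀ y, 0 < PtY y) (hPsYpos : ∀ y, 0 < PsY y) (hPpYpos : ∀ y, 0 < PpY y)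
    (hPtEZpos : ∀ e z, 0 < ∑ y, Pt e z y)
    -- conditional independence of e and z given y under P_t:
    -- P_t(e,z|y) = P_t(e|y) · P_t(z|y)
    (hindep : ∀ e z y,
      Pt e z y / PtY y = ((∑ z', Pt e z' y) / PtY y) * ((∑ e', Pt e' z y) / PtY y))
    -- label shift: P_t(e|y) = P_s(e|y) and P_t(z|y) = P_p(z|y)
    (hshiftE : ∀ e y, (∑ z', Pt e z' y) / PtY y = Ps e y / PsY y)
    (hshiftZ : ∀ z y, (∑ e', Pt e' z y) / PtY y = Pp z y / PpY y)
    -- softmax posteriors: P_s(y|e) ∝ exp(e_y) and P_p(y|z) ∝ exp(z_y)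
    (hfts : ∀ e y, Ps e y / (∑ y', Ps e y') =
      Real.exp (vece e y) / ∑ i, Real.exp (vece e i))
    (hzs : ∀ z y, Pp z y / (∑ y', Pp z y') =
      Real.exp (vecz z y) / ∑ i, Real.exp (vecz z i)) :
    ∀ e z y, Pt e z y / (∑ y', Pt e z y') =
      Real.exp (vece e y + vecz z y - Real.log (PsY y) - Real.log (PpY y)
        + Real.log (PtY y)) /
      ∑ i, Real.exp (vece e i + vecz z i - Real.log (PsY i) - Real.log (PpY i)
        + Real.log (PtY i)) :=
  gla_posterior_formula_general vece vecz Pt Ps Pp PtY PsY PpY hPtYpos hPsYpos hPpYpos hPtEZpos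
    hindep hshiftE hshiftZ hfts hzs
end

section
/- Under the assumptions of the GLA posterior formula (conditional independence of f_ft(X) and f_zs(X) given Y, label shift, exponential-family posteriors, class-balanced target), the classifier f_gla = f_ft + f_zs − π_s − π_p satisfies R_t(f_gla) ≤ R_t(g(f_zs, f_ft)) for every function g: ℝ^K × ℝ^K → ℝ^K; in particular R_t(f_gla) ≤ R_t(f_ft) and R_t(f_gla) ≤ R_t(f_ft + f_zs). -/
/-!
Conditional independence and label shift factor the target posterior as
`P_t(y | e, z) ∝ P_t(y) · P_s(y | e) / P_s(y) · P_p(y | z) / P_p(y)`; with softmax posteriors and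
a uniform `P_t(y)` this is a positive multiple (depending only on `(e, z)`) of
`exp (f_ft + f_zs − π_s − π_p)_y`. So the GLA classifier picks, at every input, a label of
maximal posterior mass, and no classifier has smaller pointwise, hence total, error mass.
-/

open Finset Real

lemma eq_div_mul_exp_of_normalize_eq_softmax {ι : Type*} [Fintype ι] {p v : ι → ℝ}
    (h : ∀ y, p y / ∑ y', p y' = exp (v y) / ∑ i, exp (v i)) (y : ι) :
    p y = (∑ y', p y') / (∑ i, exp (v i)) * exp (v y) := by
  have hZ : 0 < ∑ i, exp (v i) := sum_pos (fun i _ => exp_pos (v i)) ⟨y, mem_univ y⟩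
  have hS : ∑ y', p y' ≠ 0 := by
    intro hS
    have := h y
    rw [hS, div_zero] at this
    exact (div_pos (exp_pos (v y)) hZ).ne this
  have := h y
  field_simp at this ⊢
  linarith

lemma eq_mul_exp_sub_log_of_condIndep {pt pe pz q ps pp qs qp Ae Az ae az : ℝ}
    (hq : q ≠ 0) (hqs : 0 < qs) (hqp : 0 < qp)
    (hindep : pt / q = pe / q * (pz / q)) (hshiftE : pe / q = ps / qs) (hshiftZ : pz / q = pp / qp)
    (hps : ps = Ae * exp ae) (hpp : pp = Az * exp az) :
    pt = q * Ae * Az * exp (ae + az - log qs - log qp) := by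
  rw [hshiftE, hshiftZ, div_eq_iff hq] at hindep
  rw [hindep, hps, hpp, exp_sub, exp_sub, exp_add, exp_log hqs, exp_log hqp]
  field_simp

lemma le_of_eq_mul_exp {ι : Type*} {p s : ι → ℝ} {C : ℝ} (hp : ∀ y, p y = C * exp (s y))
    (hp_nonneg : ∀ y, 0 ≤ p y) {a b : ι} (h : s b ≤ s a) : p b ≤ p a := by
  have hC : 0 ≤ C := nonneg_of_mul_nonneg_left (hp a ▸ hp_nonneg a) (exp_pos (s a))
  rw [hp a, hp b]
  gcongr

lemma sum_filter_ne_le_sum_filter_ne {ι M : Type*} [Fintype ι] [DecidableEq ι]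
    [AddCommGroup M] [PartialOrder M] [IsOrderedAddMonoid M] {p : ι → M} {a b : ι}
    (h : p b ≤ p a) :
    ∑ y ∈ univ.filter (fun y => y ≠ a), p y ≤ ∑ y ∈ univ.filter (fun y => y ≠ b), p y := by
  simp only [filter_ne', sum_erase_eq_sub (mem_univ _)]
  exact sub_le_sub_left h _

theorem gla_is_bayes_optimal_ensemble_general
    {E Z : Type*} [Fintype E] [Fintype Z] {K : ℕ}
    (vece : E → Fin K → ℝ) (vecz : Z → Fin K → ℝ)
    (Pt : E → Z → Fin K → ℝ)
    (Ps : E → Fin K → ℝ) (Pp : Z → Fin K → ℝ)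
    (hPt : ∀ e z y, 0 ≤ Pt e z y)
    (PtY PsY PpY : Fin K → ℝ)
    (hPtYpos : ∀ y, 0 < PtY y) (hPsYpos : ∀ y, 0 < PsY y) (hPpYpos : ∀ y, 0 < PpY y)
    -- conditional independence given y under P_t
    (hindep : ∀ e z y,
      Pt e z y / PtY y = ((∑ z', Pt e z' y) / PtY y) * ((∑ e', Pt e' z y) / PtY y))
    -- label shift
    (hshiftE : ∀ e y, (∑ z', Pt e z' y) / PtY y = Ps e y / PsY y)
    (hshiftZ : ∀ z y, (∑ e', Pt e' z y) / PtY y = Pp z y / PpY y)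
    -- softmax posteriors
    (hfts : ∀ e y, Ps e y / (∑ y', Ps e y') =
      Real.exp (vece e y) / ∑ i, Real.exp (vece e i))
    (hzs : ∀ z y, Pp z y / (∑ y', Pp z y') =
      Real.exp (vecz z y) / ∑ i, Real.exp (vecz z i))
    -- class-balanced target distribution
    (hbal : ∀ y, PtY y = 1 / K)
    -- log priors
    (piS piP : Fin K → ℝ)
    (hpiS : ∀ y, piS y = Real.log (PsY y)) (hpiP : ∀ y, piP y = Real.log (PpY y))
    -- the GLA classifier: argmax of f_ft + f_zs − π_s − π_p
    (cgla : E → Z → Fin K)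
    (hcgla : ∀ e z y, vece e y + vecz z y - piS y - piP y ≤
      vece e (cgla e z) + vecz z (cgla e z) - piS (cgla e z) - piP (cgla e z))
    -- an arbitrary ensembling function g of the two scores and its classifier
    (cg : E → Z → Fin K)
    -- the fine-tuned classifier: argmax of f_ft
    (cft : E → Z → Fin K)
    -- the naive ensemble classifier: argmax of f_ft + f_zs
    (cens : E → Z → Fin K) :
    ((∑ e, ∑ z, ∑ y ∈ univ.filter (fun y => y ≠ cgla e z), Pt e z y) ≤
      ∑ e, ∑ z, ∑ y ∈ univ.filter (fun y => y ≠ cg e z), Pt e z y) ∧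
    ((∑ e, ∑ z, ∑ y ∈ univ.filter (fun y => y ≠ cgla e z), Pt e z y) ≤
      ∑ e, ∑ z, ∑ y ∈ univ.filter (fun y => y ≠ cft e z), Pt e z y) ∧
    ((∑ e, ∑ z, ∑ y ∈ univ.filter (fun y => y ≠ cgla e z), Pt e z y) ≤
      ∑ e, ∑ z, ∑ y ∈ univ.filter (fun y => y ≠ cens e z), Pt e z y) := by
  have hposterior : ∀ e z y, Pt e z y =
      1 / K * ((∑ y', Ps e y') / ∑ i, exp (vece e i)) * ((∑ y', Pp z y') / ∑ i, exp (vecz z i)) *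
        exp (vece e y + vecz z y - piS y - piP y) := by
    intro e z y
    rw [hpiS, hpiP, ← hbal y]
    exact eq_mul_exp_sub_log_of_condIndep (hPtYpos y).ne' (hPsYpos y) (hPpYpos y)
      (hindep e z y) (hshiftE e y) (hshiftZ z y)
      (eq_div_mul_exp_of_normalize_eq_softmax (hfts e) y)
      (eq_div_mul_exp_of_normalize_eq_softmax (hzs z) y)
  have hbayes : ∀ e z c, Pt e z c ≤ Pt e z (cgla e z) := fun e z c =>
    le_of_eq_mul_exp (hposterior e z) (hPt e z) (hcgla e z c)
  have hrisk : ∀ c : E → Z → Fin K,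
      (∑ e, ∑ z, ∑ y ∈ univ.filter (fun y => y ≠ cgla e z), Pt e z y) ≤
        ∑ e, ∑ z, ∑ y ∈ univ.filter (fun y => y ≠ c e z), Pt e z y := fun c =>
    sum_le_sum fun e _ => sum_le_sum fun z _ => sum_filter_ne_le_sum_filter_ne (hbayes e z (c e z))
  exact ⟨hrisk cg, hrisk cft, hrisk cens⟩

/-- Under the assumptions of the GLA posterior formula (conditional
independence of the two scores given the label, label shift, softmax
posteriors, class-balanced target), the GLA classifier
`argmax_y (f_ft + f_zs − π_s − π_p)_y` has target 0-1 risk no larger than the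
classifier derived from any ensembling function `g` of the two scores; in
particular no larger than the fine-tuned classifier and the naive ensemble. -/
theorem gla_is_bayes_optimal_ensemble
    {E Z : Type*} [Fintype E] [Fintype Z] {K : ℕ} (hK : 0 < K)
    (vece : E → Fin K → ℝ) (vecz : Z → Fin K → ℝ)
    (Pt : E → Z → Fin K → ℝ)
    (Ps : E → Fin K → ℝ) (Pp : Z → Fin K → ℝ)
    (hPt : ∀ e z y, 0 ≤ Pt e z y) (hPs : ∀ e y, 0 ≤ Ps e y) (hPp : ∀ z y, 0 ≤ Pp z y)
    (hPtsum : ∑ e, ∑ z, ∑ y, Pt e z y = 1)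
    (hPssum : ∑ e, ∑ y, Ps e y = 1) (hPpsum : ∑ z, ∑ y, Pp z y = 1)
    (PtY PsY PpY : Fin K → ℝ)
    (hPtY : ∀ y, PtY y = ∑ e, ∑ z, Pt e z y)
    (hPsY : ∀ y, PsY y = ∑ e, Ps e y)
    (hPpY : ∀ y, PpY y = ∑ z, Pp z y)
    (hPtYpos : ∀ y, 0 < PtY y) (hPsYpos : ∀ y, 0 < PsY y) (hPpYpos : ∀ y, 0 < PpY y)
    (hPtEZpos : ∀ e z, 0 < ∑ y, Pt e z y)
    -- conditional independence given y under P_t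
    (hindep : ∀ e z y,
      Pt e z y / PtY y = ((∑ z', Pt e z' y) / PtY y) * ((∑ e', Pt e' z y) / PtY y))
    -- label shift
    (hshiftE : ∀ e y, (∑ z', Pt e z' y) / PtY y = Ps e y / PsY y)
    (hshiftZ : ∀ z y, (∑ e', Pt e' z y) / PtY y = Pp z y / PpY y)
    -- softmax posteriors
    (hfts : ∀ e y, Ps e y / (∑ y', Ps e y') =
      Real.exp (vece e y) / ∑ i, Real.exp (vece e i))
    (hzs : ∀ z y, Pp z y / (∑ y', Pp z y') =
      Real.exp (vecz z y) / ∑ i, Real.exp (vecz z i))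
    -- class-balanced target distribution
    (hbal : ∀ y, PtY y = 1 / K)
    -- log priors
    (piS piP : Fin K → ℝ)
    (hpiS : ∀ y, piS y = Real.log (PsY y)) (hpiP : ∀ y, piP y = Real.log (PpY y))
    -- the GLA classifier: argmax of f_ft + f_zs − π_s − π_p
    (cgla : E → Z → Fin K)
    (hcgla : ∀ e z y, vece e y + vecz z y - piS y - piP y ≤
      vece e (cgla e z) + vecz z (cgla e z) - piS (cgla e z) - piP (cgla e z))
    -- an arbitrary ensembling function g of the two scores and its classifier
    (g : (Fin K → ℝ) → (Fin K → ℝ) → (Fin K → ℝ))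
    (cg : E → Z → Fin K)
    (hcg : ∀ e z y, g (vecz z) (vece e) y ≤ g (vecz z) (vece e) (cg e z))
    -- the fine-tuned classifier: argmax of f_ft
    (cft : E → Z → Fin K)
    (hcft : ∀ e z y, vece e y ≤ vece e (cft e z))
    -- the naive ensemble classifier: argmax of f_ft + f_zs
    (cens : E → Z → Fin K)
    (hcens : ∀ e z y, vece e y + vecz z y ≤ vece e (cens e z) + vecz z (cens e z)) :
    ((∑ e, ∑ z, ∑ y ∈ univ.filter (fun y => y ≠ cgla e z), Pt e z y) ≤
      ∑ e, ∑ z, ∑ y ∈ univ.filter (fun y => y ≠ cg e z), Pt e z y) ∧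
    ((∑ e, ∑ z, ∑ y ∈ univ.filter (fun y => y ≠ cgla e z), Pt e z y) ≤
      ∑ e, ∑ z, ∑ y ∈ univ.filter (fun y => y ≠ cft e z), Pt e z y) ∧
    ((∑ e, ∑ z, ∑ y ∈ univ.filter (fun y => y ≠ cgla e z), Pt e z y) ≤
      ∑ e, ∑ z, ∑ y ∈ univ.filter (fun y => y ≠ cens e z), Pt e z y) :=
  gla_is_bayes_optimal_ensemble_general vece vecz Pt Ps Pp hPt PtY PsY PpY hPtYpos hPsYpos hPpYpos
    hindep hshiftE hshiftZ hfts hzs hbal piS piP hpiS hpiP cgla hcgla cg cft cens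
end

section
/- Under the label-shift assumption P_p(x|y) = P_s(x|y), the pre-training label prior vector q with q(y) = P_p(y) satisfies the fixed-point equation q = P q, where P is the K×K matrix with entries P_{y,y'} = E_{x ~ P_s(x|y')}[P_p(y|x)]. -/
open Finset

/-- Under label shift (`P_p(x|y) = P_s(x|y)`), the pre-training label prior
`q(y) = P_p(y)` is a fixed point of the matrix `P` with entries
`P_{y,y'} = E_{x ~ P_s(x|y')}[P_p(y|x)]`, i.e. `q = P q`. -/
theorem prior_is_fixed_point_of_transition_matrix
    {X : Type*} [Fintype X] {K : ℕ}
    (Ps Pp : X → Fin K → ℝ)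
    (hPs : ∀ x y, 0 ≤ Ps x y) (hPp : ∀ x y, 0 ≤ Pp x y)
    (hPssum : ∑ x, ∑ y, Ps x y = 1) (hPpsum : ∑ x, ∑ y, Pp x y = 1)
    (qs q : Fin K → ℝ)
    (hqs : ∀ y, qs y = ∑ x, Ps x y) (hq : ∀ y, q y = ∑ x, Pp x y)
    (hqspos : ∀ y, 0 < qs y) (hqpos : ∀ y, 0 < q y)
    (hPpXpos : ∀ x, 0 < ∑ y, Pp x y)
    -- label shift: P_p(x|y) = P_s(x|y)
    (hshift : ∀ x y, Pp x y / q y = Ps x y / qs y)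
    (P : Fin K → Fin K → ℝ)
    -- P_{y,y'} = E_{x ~ P_s(x|y')}[P_p(y|x)]
    (hP : ∀ y y', P y y' =
      ∑ x, (Ps x y' / qs y') * (Pp x y / ∑ y'', Pp x y'')) :
    ∀ y, q y = ∑ y', P y y' * q y' := by
  intro y
  have key : ∀ y', P y y' * q y' = ∑ x, Pp x y' * (Pp x y / ∑ y'', Pp x y'') := by
    intro y'
    rw [hP, Finset.sum_mul]
    refine Finset.sum_congr rfl fun x _ => ?_
    rw [← hshift x y']
    field_simp [(hqpos y').ne', (hPpXpos x).ne']
  calc q y = ∑ x, Pp x y := hq y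
    _ = ∑ x, ∑ y', Pp x y' * (Pp x y / ∑ y'', Pp x y'') := by
        refine Finset.sum_congr rfl fun x _ => ?_
        rw [← Finset.sum_mul, mul_div_cancel₀ _ (hPpXpos x).ne']
    _ = ∑ y', ∑ x, Pp x y' * (Pp x y / ∑ y'', Pp x y'') := Finset.sum_comm
    _ = ∑ y', P y y' * q y' := by
        refine Finset.sum_congr rfl fun y' _ => (key y').symm
end

section
/- If (f_ft(X) ⟂ f_zs(X)) | Y under P_t, then for any y, P_t(y | f_ft(x), f_zs(x)) = P_s(y|f_ft(x))/P_s(y) · P_p(y|f_zs(x))/P_p(y) · C(f_ft(x), f_zs(x)) · P_t(y), where C is a normalizing factor independent of y, assuming label shift (P_t(e|y) = P_s(e|y) and P_t(z|y) = P_p(z|y)). -/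
open Finset

/-- Conditional-independence factorization of the target posterior: if the two
score vectors are conditionally independent given the label under `P_t`, and
label shift holds (`P_t(e|y) = P_s(e|y)` and `P_t(z|y) = P_p(z|y)`), then
`P_t(y|e,z) = P_s(y|e)/P_s(y) · P_p(y|z)/P_p(y) · C(e,z) · P_t(y)` for some
normalizing factor `C` independent of `y`. -/
theorem condindep_posterior_factorization
    {E Z : Type*} [Fintype E] [Fintype Z] {K : ℕ}
    (Pt : E → Z → Fin K → ℝ)
    (Ps : E → Fin K → ℝ) (Pp : Z → Fin K → ℝ)
    (hPt : ∀ e z y, 0 ≤ Pt e z y) (hPs : ∀ e y, 0 ≤ Ps e y) (hPp : ∀ z y, 0 ≤ Pp z y)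
    (hPtsum : ∑ e, ∑ z, ∑ y, Pt e z y = 1)
    (hPssum : ∑ e, ∑ y, Ps e y = 1) (hPpsum : ∑ z, ∑ y, Pp z y = 1)
    (PtY PsY PpY : Fin K → ℝ)
    (hPtY : ∀ y, PtY y = ∑ e, ∑ z, Pt e z y)
    (hPsY : ∀ y, PsY y = ∑ e, Ps e y)
    (hPpY : ∀ y, PpY y = ∑ z, Pp z y)
    (hPtYpos : ∀ y, 0 < PtY y) (hPsYpos : ∀ y, 0 < PsY y) (hPpYpos : ∀ y, 0 < PpY y)
    (hPsEpos : ∀ e, 0 < ∑ y, Ps e y) (hPpZpos : ∀ z, 0 < ∑ y, Pp z y)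
    (hPtEZpos : ∀ e z, 0 < ∑ y, Pt e z y)
    -- conditional independence: P_t(e,z|y) = P_t(e|y) · P_t(z|y)
    (hindep : ∀ e z y,
      Pt e z y / PtY y = ((∑ z', Pt e z' y) / PtY y) * ((∑ e', Pt e' z y) / PtY y))
    -- label shift
    (hshiftE : ∀ e y, (∑ z', Pt e z' y) / PtY y = Ps e y / PsY y)
    (hshiftZ : ∀ z y, (∑ e', Pt e' z y) / PtY y = Pp z y / PpY y) :
    ∃ C : E → Z → ℝ, ∀ e z y,
      Pt e z y / (∑ y', Pt e z y') =
        (Ps e y / (∑ y', Ps e y')) / PsY y *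
        ((Pp z y / (∑ y', Pp z y')) / PpY y) *
        C e z * PtY y := by
  refine ⟨fun e z => (∑ y', Ps e y') * (∑ y', Pp z y') / (∑ y', Pt e z y'), fun e z y => ?_⟩
  have key : Pt e z y = (Ps e y / PsY y) * (Pp z y / PpY y) * PtY y := by
    have h := hindep e z y
    rw [hshiftE, hshiftZ] at h
    have hy := (hPtYpos y).ne'
    field_simp at h ⊢
    linarith [h]
  have hA := (hPsEpos e).ne'
  have hB := (hPpZpos z).ne'
  have hS := (hPtEZpos e z).ne'
  have hsY := (hPsYpos y).ne'
  have hpY := (hPpYpos y).ne'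
  rw [key]
  field_simp
end
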